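/- (Lemma 1) Let f : ℝ → ℝ be defined by f(t) := max( t·(1 − t/2), 1 − 1/t ). Let n and r be positive natural numbers, let X be a nonempty finite set of nonzero vectors in 𝔽₂ⁿ with |X| = m, and set x := m · 2^(−r). If H is a matrix chosen uniformly at random from all r × n matrices over 𝔽₂, then P(X ∩ ker H ≠ ∅) ≥ f(x). -/

import Mathlib

/-!
Let `N(H)` be the number of elements of `X` in `ker H`. For `v ≠ 0` the map `H ↦ H v` is a
surjective linear map onto `𝔽₂ʳ`, and for distinct nonzero `v, w` (linearly independent over `𝔽₂`)
so is `H ↦ (H v, H w)` onto `𝔽₂ʳ × 𝔽₂ʳ`. Hence `E[N] = x` and `E[N (N - 1)] = m (m - 1) 2^(-2r) ≤ x²`.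
Bonferroni (`𝟙[N ≠ 0] ≥ N - N (N - 1) / 2`) gives `P(N ≠ 0) ≥ x - x² / 2`, and Cauchy–Schwarz
(`E[N]² ≤ P(N ≠ 0) E[N²]`) gives `P(N ≠ 0) ≥ x / (1 + x) ≥ 1 - 1 / x`.
-/

open Finset
open scoped Matrix

theorem AddMonoidHom.card_ker_mul_card_of_surjective {G G' : Type*} [AddGroup G] [AddGroup G']
    (f : G →+ G') (hf : Function.Surjective f) : Nat.card f.ker * Nat.card G' = Nat.card G := by
  rw [← f.ker.card_mul_index, AddSubgroup.index_ker, AddMonoidHom.range_eq_top.2 hf,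
    AddSubgroup.card_top]

theorem Fintype.card_matrix {K m n : Type*} [Fintype K] [Fintype m] [DecidableEq m]
    [Fintype n] [DecidableEq n] :
    Fintype.card (Matrix m n K) = Fintype.card K ^ (Fintype.card m * Fintype.card n) := by
  change Fintype.card (m → n → K) = _
  rw [Fintype.card_fun, Fintype.card_fun, pow_mul']

theorem ZMod.linearIndependent_pair {M : Type*} [AddCommGroup M] [Module (ZMod 2) M] {x y : M}
    (hx : x ≠ 0) (hy : y ≠ 0) (hxy : x ≠ y) : LinearIndependent (ZMod 2) ![x, y] := by
  rw [LinearIndependent.pair_iff]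
  have hyy : y + y = 0 := by rw [← two_smul (ZMod 2), show (2 : ZMod 2) = 0 from rfl, zero_smul]
  have h01 : ∀ a : ZMod 2, a = 0 ∨ a = 1 := by decide
  intro s t hst
  rcases h01 s with rfl | rfl <;> rcases h01 t with rfl | rfl <;>
    simp only [zero_smul, one_smul, zero_add, add_zero] at hst
  exacts [⟨rfl, rfl⟩, (hy hst).elim, (hx hst).elim,
    (hxy (add_right_cancel (hst.trans hyy.symm))).elim]

namespace Matrix

variable {K ι m n : Type*} [Field K] [Fintype ι] [DecidableEq ι] [Fintype n]

theorem exists_mul_transpose_eq_one_of_linearIndependent {v : ι → n → K}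
    (hv : LinearIndependent K v) : ∃ B : Matrix ι n K, B * (of v)ᵀ = 1 := by
  rw [← vecMul_surjective_iff_exists_left_inverse, ← coe_vecMulLinear, ← LinearMap.range_eq_top,
    range_vecMulLinear]
  exact span_flip_eq_top_iff_linearIndependent.2 hv

variable [DecidableEq n] [Fintype K] [DecidableEq K] [Fintype m] [DecidableEq m]

theorem card_filter_forall_mulVec_eq_zero_mul {v : ι → n → K} (hv : LinearIndependent K v) :
    #{H : Matrix m n K | ∀ i, H *ᵥ v i = 0} * Fintype.card (Matrix m ι K) =
      Fintype.card (Matrix m n K) := by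
  obtain ⟨B, hB⟩ := exists_mul_transpose_eq_one_of_linearIndependent hv
  -- the columns of `H * (of v)ᵀ` are the vectors `H *ᵥ v i`
  let Φ : Matrix m n K →+ Matrix m ι K := addMonoidHomMulRight (of v)ᵀ
  have hΦ : Function.Surjective Φ := fun C => ⟨C * B, by simp [Φ, Matrix.mul_assoc, hB]⟩
  have hker : ∀ H, H ∈ Φ.ker ↔ ∀ i, H *ᵥ v i = 0 := fun H => by
    simp [Φ, ← Matrix.ext_iff, funext_iff, mul_apply, mulVec, dotProduct, forall_comm (α := m)]
  rw [← Fintype.card_subtype, ← Fintype.card_congr (Equiv.subtypeEquivRight hker),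
    ← Nat.card_eq_fintype_card, ← Nat.card_eq_fintype_card, ← Nat.card_eq_fintype_card]
  exact Φ.card_ker_mul_card_of_surjective hΦ

theorem card_filter_mulVec_eq_zero_mul {v : n → K} (hv : v ≠ 0) :
    #{H : Matrix m n K | H *ᵥ v = 0} * Fintype.card K ^ Fintype.card m =
      Fintype.card (Matrix m n K) := by
  have h := card_filter_forall_mulVec_eq_zero_mul (m := m)
    (linearIndependent_unique_iff.2 hv : LinearIndependent K ![v])
  simpa [Fin.forall_fin_one, Fintype.card_matrix (m := m) (n := Fin 1)] using h

theorem card_filter_mulVec_eq_zero_and_mulVec_eq_zero_mul {v w : n → K}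
    (hvw : LinearIndependent K ![v, w]) :
    #{H : Matrix m n K | H *ᵥ v = 0 ∧ H *ᵥ w = 0} * (Fintype.card K ^ Fintype.card m) ^ 2 =
      Fintype.card (Matrix m n K) := by
  have h := card_filter_forall_mulVec_eq_zero_mul (m := m) hvw
  simpa [Fin.forall_fin_two, Fintype.card_matrix (m := m) (n := Fin 2), pow_mul] using h

end Matrix

namespace Finset

theorem offDiag_filter {α : Type*} [DecidableEq α] (s : Finset α) (p : α → Prop)
    [DecidablePred p] : (s.filter p).offDiag = s.offDiag.filter fun q => p q.1 ∧ p q.2 := by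
  ext
  simp only [mem_offDiag, mem_filter]
  tauto

variable {ι : Type*} (s : Finset ι) (N : ι → ℕ)

theorem two_mul_sum_le_two_mul_card_filter_ne_zero_add_sum_mul_sub_one :
    2 * ∑ i ∈ s, N i ≤ 2 * #{i ∈ s | N i ≠ 0} + ∑ i ∈ s, N i * (N i - 1) := by
  rw [card_filter, mul_sum, mul_sum, ← sum_add_distrib]
  refine sum_le_sum fun i _ => ?_
  rcases N i with _ | _ | k
  · simp
  · simp
  · rw [if_pos (by omega), add_tsub_cancel_right]
    nlinarith

theorem sq_sum_le_card_filter_ne_zero_mul_sum_sq :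
    (∑ i ∈ s, N i) ^ 2 ≤ #{i ∈ s | N i ≠ 0} * ∑ i ∈ s, N i ^ 2 := by
  rw [← sum_filter_ne_zero]
  exact (sq_sum_le_card_mul_sum_sq ..).trans
    (Nat.mul_le_mul_left _ (sum_le_sum_of_subset (filter_subset _ s)))

theorem sum_sq_eq_sum_add_sum_mul_sub_one :
    ∑ i ∈ s, N i ^ 2 = ∑ i ∈ s, N i + ∑ i ∈ s, N i * (N i - 1) := by
  rw [← sum_add_distrib]
  refine sum_congr rfl fun i _ => ?_
  rcases N i with _ | k
  · simp
  · rw [add_tsub_cancel_right]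
    ring

end Finset

section Moments

variable {K m n : Type*} [Field K] [Fintype K] [DecidableEq K] [Fintype m] [DecidableEq m]
  [Fintype n] [DecidableEq n]

def codewordCount (X : Finset (n → K)) (H : Matrix m n K) : ℕ := #{v ∈ X | H *ᵥ v = 0}

variable {X : Finset (n → K)}

theorem sum_codewordCount_mul (hX : ∀ v ∈ X, v ≠ 0) :
    (∑ H : Matrix m n K, codewordCount X H) * Fintype.card K ^ Fintype.card m =
      #X * Fintype.card (Matrix m n K) := by
  have h := sum_card_bipartiteAbove_eq_sum_card_bipartiteBelow (s := univ) (t := X)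
    (fun (H : Matrix m n K) v => H *ᵥ v = 0)
  simp only [bipartiteAbove, bipartiteBelow] at h
  simp only [codewordCount]
  rw [h, sum_mul, sum_congr rfl fun v hv => Matrix.card_filter_mulVec_eq_zero_mul (hX v hv),
    sum_const, smul_eq_mul]

theorem sum_codewordCount_mul_sub_one_mul
    (hX : ∀ v ∈ X, ∀ w ∈ X, v ≠ w → LinearIndependent K ![v, w]) :
    (∑ H : Matrix m n K, codewordCount X H * (codewordCount X H - 1)) *
        (Fintype.card K ^ Fintype.card m) ^ 2 =
      #X * (#X - 1) * Fintype.card (Matrix m n K) := by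
  have hcount (H : Matrix m n K) : codewordCount X H * (codewordCount X H - 1) =
      #{p ∈ X.offDiag | H *ᵥ p.1 = 0 ∧ H *ᵥ p.2 = 0} := by
    rw [codewordCount, Nat.mul_sub_one, ← offDiag_card, offDiag_filter]
  have hpair : ∀ p ∈ X.offDiag, #{H : Matrix m n K | H *ᵥ p.1 = 0 ∧ H *ᵥ p.2 = 0} *
      (Fintype.card K ^ Fintype.card m) ^ 2 = Fintype.card (Matrix m n K) := fun p hp => by
    obtain ⟨hv, hw, hvw⟩ := mem_offDiag.1 hp
    exact Matrix.card_filter_mulVec_eq_zero_and_mulVec_eq_zero_mul (hX _ hv _ hw hvw)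
  have h := sum_card_bipartiteAbove_eq_sum_card_bipartiteBelow (s := univ) (t := X.offDiag)
    (fun (H : Matrix m n K) p => H *ᵥ p.1 = 0 ∧ H *ᵥ p.2 = 0)
  simp only [bipartiteAbove, bipartiteBelow] at h
  simp only [hcount]
  rw [h, sum_mul, sum_congr rfl hpair, sum_const, smul_eq_mul, offDiag_card, Nat.mul_sub_one]

end Moments

theorem max_le_div_of_moment_bounds {T S F a x : ℝ} (hT : 0 < T) (hx : 0 < x) (ha : 0 ≤ a)
    (hS : S = x * T) (hF : F ≤ x ^ 2 * T) (hB : 2 * S ≤ 2 * a + F)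
    (hCS : S ^ 2 ≤ a * (S + F)) :
    max (x * (1 - x / 2)) (1 - 1 / x) ≤ a / T := by
  subst hS
  refine max_le ((le_div_iff₀ hT).2 (by linarith)) ?_
  have h1 : x * T ≤ a * (1 + x) := by
    have h : (x * T) * (x * T) ≤ (a * (1 + x)) * (x * T) := by
      nlinarith [mul_le_mul_of_nonneg_left hF ha]
    exact le_of_mul_le_mul_right h (by positivity)
  rw [le_div_iff₀ hT, one_sub_div hx.ne', div_mul_eq_mul_div, div_le_iff₀ hx]
  have h2 : (x - 1) * T * (1 + x) ≤ a * x * (1 + x) := by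
    nlinarith [mul_le_mul_of_nonneg_left h1 hx.le]
  exact le_of_mul_le_mul_right h2 (by positivity)

theorem max_le_card_filter_ne_zero_div {Ω : Type*} [Fintype Ω] [Nonempty Ω] (N : Ω → ℕ) {x : ℝ}
    (hx : 0 < x) (hS : ((∑ ω, N ω : ℕ) : ℝ) = x * Fintype.card Ω)
    (hF : ((∑ ω, N ω * (N ω - 1) : ℕ) : ℝ) ≤ x ^ 2 * Fintype.card Ω) :
    max (x * (1 - x / 2)) (1 - 1 / x) ≤ #{ω | N ω ≠ 0} / Fintype.card Ω := by
  have hB := univ.two_mul_sum_le_two_mul_card_filter_ne_zero_add_sum_mul_sub_one N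
  have hCS := univ.sq_sum_le_card_filter_ne_zero_mul_sum_sq N
  rw [sum_sq_eq_sum_add_sum_mul_sub_one] at hCS
  exact max_le_div_of_moment_bounds (by exact_mod_cast Fintype.card_pos) hx (by positivity) hS hF
    (by exact_mod_cast hB) (by exact_mod_cast hCS)

theorem prob_meets_random_code_lower_bound_general (n r m : ℕ)
    (f : ℝ → ℝ) (hf : ∀ t, f t = max (t * (1 - t / 2)) (1 - 1 / t))
    (X : Finset (Fin n → ZMod 2)) (hXne : X.Nonempty) (hX : ∀ v ∈ X, v ≠ 0)
    (hm : X.card = m)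
    (x : ℝ) (hx : x = (m : ℝ) * (2 : ℝ) ^ (-(r : ℤ))) :
    ((Finset.univ.filter
        (fun H : Matrix (Fin r) (Fin n) (ZMod 2) => ∃ v ∈ X, H.mulVec v = 0)).card : ℝ) /
      (Fintype.card (Matrix (Fin r) (Fin n) (ZMod 2)) : ℝ)
      ≥ f x := by
  set N : Matrix (Fin r) (Fin n) (ZMod 2) → ℕ := codewordCount X
  set T := Fintype.card (Matrix (Fin r) (Fin n) (ZMod 2))
  have hS : (∑ H, N H) * 2 ^ r = m * T := by
    simpa [hm] using sum_codewordCount_mul (m := Fin r) hX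
  have hF : (∑ H, N H * (N H - 1)) * (2 ^ r) ^ 2 ≤ m ^ 2 * T := by
    have h := sum_codewordCount_mul_sub_one_mul (m := Fin r)
      fun v hv w hw hvw => ZMod.linearIndependent_pair (hX v hv) (hX w hw) hvw
    simp only [ZMod.card, Fintype.card_fin, hm] at h
    exact h ▸ Nat.mul_le_mul_right _ (sq m ▸ Nat.mul_le_mul_left m (Nat.sub_le m 1))
  have hevent : (univ.filter fun H : Matrix (Fin r) (Fin n) (ZMod 2) => ∃ v ∈ X, H *ᵥ v = 0) =
      univ.filter fun H => N H ≠ 0 := by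
    simp [N, codewordCount]
  have hm0 : 0 < m := hm ▸ hXne.card_pos
  rw [zpow_neg, zpow_natCast, ← div_eq_mul_inv] at hx
  subst hx
  rw [hevent, hf, ge_iff_le]
  refine max_le_card_filter_ne_zero_div N (by positivity) ?_ ?_
  · rw [div_mul_eq_mul_div, eq_div_iff (by positivity)]
    exact_mod_cast hS
  · rw [div_pow, div_mul_eq_mul_div, le_div_iff₀ (by positivity)]
    exact_mod_cast hF

/-- Lemma 1: Let `f(t) := max(t·(1 - t/2), 1 - 1/t)`. For a nonempty
finite set `X` of `m` nonzero vectors of `𝔽₂ⁿ`, setting `x := m · 2^(-r)`, the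
probability that `X` meets the random code `ker H` (for `H` a uniformly random `r × n`
matrix over `𝔽₂`) is at least `f(x)`. -/
theorem prob_meets_random_code_lower_bound (n r m : ℕ) (hn : 0 < n) (hr : 0 < r)
    (f : ℝ → ℝ) (hf : ∀ t, f t = max (t * (1 - t / 2)) (1 - 1 / t))
    (X : Finset (Fin n → ZMod 2)) (hXne : X.Nonempty) (hX : ∀ v ∈ X, v ≠ 0)
    (hm : X.card = m)
    (x : ℝ) (hx : x = (m : ℝ) * (2 : ℝ) ^ (-(r : ℤ))) :
    ((Finset.univ.filter
        (fun H : Matrix (Fin r) (Fin n) (ZMod 2) => ∃ v ∈ X, H.mulVec v = 0)).card : ℝ) /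
      (Fintype.card (Matrix (Fin r) (Fin n) (ZMod 2)) : ℝ)
      ≥ f x :=
  prob_meets_random_code_lower_bound_general n r m f hf X hXne hX hm x hx
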